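/- arXiv:1103.2440 — 2 statements merged into one kernel-verified Lean document; each statement's English description precedes it below -/
import Mathlib

section
/- Let u and w be C¹ maps from a neighbourhood of the triangle K in ℝ² to ℝ². Suppose that: (i) ∫_{eᵢ} γ ((w − u) · nᵢ) ds = 0 for every affine γ : ℝ² → ℝ and each edge eᵢ, i ∈ {1,2,3}, where nᵢ is the outward unit normal to K on eᵢ; and (ii) ∫_K ∇γ · (w − u) dx = 0 for every affine γ : ℝ² → ℝ. Then ∫_K α (∇·w − ∇·u) dx = 0 for every affine function α : ℝ² → ℝ. -/
open MeasureTheory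

noncomputable section

/-- Dot product on `ℝ²`. -/
def dot (a b : ℝ × ℝ) : ℝ := a.1 * b.1 + a.2 * b.2

/-- Gradient `∇g = (∂g/∂x₁, ∂g/∂x₂)` of `g : ℝ² → ℝ`. -/
def grad2 (g : ℝ × ℝ → ℝ) (x : ℝ × ℝ) : ℝ × ℝ :=
  (fderiv ℝ g x (1, 0), fderiv ℝ g x (0, 1))

/-- Divergence `∇·w = ∂w₁/∂x₁ + ∂w₂/∂x₂` of `w : ℝ² → ℝ²`. -/
def div2 (w : ℝ × ℝ → ℝ × ℝ) (x : ℝ × ℝ) : ℝ :=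
  (fderiv ℝ w x (1, 0)).1 + (fderiv ℝ w x (0, 1)).2

/-- Line integral `∫_{[a,b]} h ds = ‖b − a‖ ∫₀¹ h((1−s)a + sb) ds`
(Euclidean length). -/
def lineIntegral (h : ℝ × ℝ → ℝ) (a b : ℝ × ℝ) : ℝ :=
  Real.sqrt ((b.1 - a.1) ^ 2 + (b.2 - a.2) ^ 2) *
    ∫ s in (0 : ℝ)..1, h ((1 - s) • a + s • b)

/-!
Put `f = w - u` and `F = α • f`. The product rule gives `α (∇·w - ∇·u) = ∇·F - ∇α · f`, and
`∫_K ∇α · f = 0` by the interior moments, `∇α` being the gradient of an affine function. By the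
divergence theorem, `∫_K ∇·F` is a signed sum of the edge fluxes `∫_{eᵢ} α (f · nᵢ) ds`, which
vanish by the edge moments.

The divergence theorem on `K` is pulled back from the reference triangle by the affine map `φ`
with linear part `z ↦ z.1 • a + z.2 • b`, `a = v 1 - v 0`, `b = v 2 - v 0`. The identity
`det(a, b) tr M = det(M a, b) + det(a, M b)` turns `det(a, b) (∇·F) ∘ φ` into
`∂₁ (F ∘ φ · b⊥) - ∂₂ (F ∘ φ · a⊥)`, and on the reference triangle `∂₂` (and, by the symmetry
`(x, y) ↦ (y, x)`, also `∂₁`) integrates by Fubini and the fundamental theorem of calculus on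
each vertical slice.
-/

open Set

def perp (a : ℝ × ℝ) : ℝ × ℝ := (a.2, -a.1)

lemma dot_smul_left (t : ℝ) (a b : ℝ × ℝ) : dot (t • a) b = t * dot a b := by
  simp only [dot, Prod.smul_fst, Prod.smul_snd, smul_eq_mul]
  ring

lemma dot_perp_mul_trace (M : ℝ × ℝ →L[ℝ] ℝ × ℝ) (a b : ℝ × ℝ) :
    dot a (perp b) * ((M (1, 0)).1 + (M (0, 1)).2) = dot (M a) (perp b) - dot (M b) (perp a) := by
  have hM : ∀ z : ℝ × ℝ, M z = z.1 • M (1, 0) + z.2 • M (0, 1) := fun z => by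
    rw [← map_smul, ← map_smul, ← map_add]; simp
  rw [hM a, hM b]
  simp only [dot, perp, Prod.fst_add, Prod.snd_add, Prod.smul_fst, Prod.smul_snd, smul_eq_mul]
  ring

lemma perp_eq_smul_of_dot_eq_zero {n e : ℝ × ℝ} (hn : n.1 ^ 2 + n.2 ^ 2 = 1) (he : dot n e = 0) :
    perp e = dot n (perp e) • n := by
  simp only [dot, perp] at he ⊢
  ext <;> simp only [Prod.smul_fst, Prod.smul_snd, smul_eq_mul]
  · linear_combination (-e.2) * hn + n.2 * he
  · linear_combination e.1 * hn - n.1 * he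

/-- `perp (b - a)` is the normal to `[a, b]` of length `‖b - a‖` on its right: the outward one
when a triangle is traversed counterclockwise. -/
def edgeFlux (F : ℝ × ℝ → ℝ × ℝ) (a b : ℝ × ℝ) : ℝ :=
  ∫ s in (0 : ℝ)..1, dot (F ((1 - s) • a + s • b)) (perp (b - a))

lemma abs_edgeFlux_eq_abs_lineIntegral (F : ℝ × ℝ → ℝ × ℝ) {n a b : ℝ × ℝ}
    (hn : n.1 ^ 2 + n.2 ^ 2 = 1) (hab : dot n (b - a) = 0) :
    |edgeFlux F a b| = |lineIntegral (fun x => dot (F x) n) a b| := by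
  set t := dot n (perp (b - a))
  have hlen : Real.sqrt ((b.1 - a.1) ^ 2 + (b.2 - a.2) ^ 2) = |t| := by
    rw [← Real.sqrt_sq_eq_abs]
    congr 1
    simp only [t, dot, perp, Prod.fst_sub, Prod.snd_sub] at hab ⊢
    linear_combination (-((b.1 - a.1) ^ 2 + (b.2 - a.2) ^ 2)) * hn +
      (n.1 * (b.1 - a.1) + n.2 * (b.2 - a.2)) * hab
  have hflux : edgeFlux F a b = t * ∫ s in (0 : ℝ)..1, dot (F ((1 - s) • a + s • b)) n := by
    rw [edgeFlux, perp_eq_smul_of_dot_eq_zero hn hab, ← intervalIntegral.integral_const_mul]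
    refine intervalIntegral.integral_congr fun s _ => ?_
    simp only [t, dot, Prod.smul_fst, Prod.smul_snd, smul_eq_mul]
    ring
  rw [hflux, lineIntegral, hlen, abs_mul, abs_mul, abs_abs]

lemma AffineMap.contDiff {E F : Type*} [NormedAddCommGroup E] [NormedSpace ℝ E]
    [FiniteDimensional ℝ E] [NormedAddCommGroup F] [NormedSpace ℝ F] (α : E →ᵃ[ℝ] F)
    {n : WithTop ℕ∞} : ContDiff ℝ n α := by
  rw [α.decomp]
  exact (LinearMap.toContinuousLinearMap α.linear).contDiff.add contDiff_const

lemma div2_smul {g : ℝ × ℝ → ℝ} {F : ℝ × ℝ → ℝ × ℝ} {x : ℝ × ℝ}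
    (hg : DifferentiableAt ℝ g x) (hF : DifferentiableAt ℝ F x) :
    div2 (fun y => g y • F y) x = g x * div2 F x + dot (grad2 g x) (F x) := by
  simp only [div2, grad2, dot, fderiv_fun_smul hg hF, add_apply,
    smul_apply, ContinuousLinearMap.smulRight_apply, Prod.fst_add,
    Prod.snd_add, Prod.smul_fst, Prod.smul_snd, smul_eq_mul]
  ring

lemma div2_sub {u w : ℝ × ℝ → ℝ × ℝ} {x : ℝ × ℝ}
    (hw : DifferentiableAt ℝ w x) (hu : DifferentiableAt ℝ u x) :
    div2 (fun y => w y - u y) x = div2 w x - div2 u x := by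
  simp only [div2, fderiv_fun_sub hw hu, sub_apply, Prod.fst_sub, Prod.snd_sub]
  ring

lemma ContDiffOn.continuousOn_div2 {F : ℝ × ℝ → ℝ × ℝ} {U : Set (ℝ × ℝ)}
    (hF : ContDiffOn ℝ 1 F U) (hU : IsOpen U) : ContinuousOn (div2 F) U := by
  have hDF := hF.continuousOn_fderiv_of_isOpen hU le_rfl
  unfold div2
  fun_prop

lemma setIntegral_mul_div2_eq_sub {K U : Set (ℝ × ℝ)} (hK : IsCompact K) (hU : IsOpen U)
    (hKU : K ⊆ U) {g : ℝ × ℝ → ℝ} {F : ℝ × ℝ → ℝ × ℝ} (hg : ContDiffOn ℝ 1 g U)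
    (hF : ContDiffOn ℝ 1 F U) :
    ∫ x in K, g x * div2 F x =
      (∫ x in K, div2 (fun y => g y • F y) x) - ∫ x in K, dot (grad2 g x) (F x) := by
  have hgF : ContDiffOn ℝ 1 (fun y => g y • F y) U := hg.smul hF
  have hDg := hg.continuousOn_fderiv_of_isOpen hU le_rfl
  have hFc := hF.continuousOn
  have hgradF : ContinuousOn (fun x => dot (grad2 g x) (F x)) U := by
    unfold dot grad2
    fun_prop
  rw [← integral_sub ((hgF.continuousOn_div2 hU).mono hKU |>.integrableOn_compact hK)
    ((hgradF.mono hKU).integrableOn_compact hK)]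
  refine setIntegral_congr_fun hK.measurableSet fun x hx => ?_
  have hU_nhds := hU.mem_nhds (hKU hx)
  rw [div2_smul ((hg.contDiffAt hU_nhds).differentiableAt one_ne_zero)
    ((hF.contDiffAt hU_nhds).differentiableAt one_ne_zero)]
  ring

def stdTriangle : Set (ℝ × ℝ) := {p | 0 ≤ p.1 ∧ 0 ≤ p.2 ∧ p.1 + p.2 ≤ 1}

lemma convex_stdTriangle : Convex ℝ stdTriangle := by
  rintro p ⟨hp₁, hp₂, hp⟩ q ⟨hq₁, hq₂, hq⟩ a b ha hb hab
  refine ⟨?_, ?_, ?_⟩ <;> simp only [Prod.fst_add, Prod.snd_add, Prod.smul_fst, Prod.smul_snd,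
    smul_eq_mul] <;> nlinarith

lemma convexHull_eq_stdTriangle :
    convexHull ℝ {((0 : ℝ), (0 : ℝ)), (1, 0), (0, 1)} = stdTriangle := by
  refine (convexHull_min ?_ convex_stdTriangle).antisymm fun p ⟨hp₁, hp₂, hp⟩ => ?_
  · rintro _ (rfl | rfl | rfl) <;> norm_num [stdTriangle]
  have hp_eq : p = ∑ i, ![1 - p.1 - p.2, p.1, p.2] i •
      ![((0 : ℝ), (0 : ℝ)), (1, 0), (0, 1)] i := by
    ext <;> simp [Fin.sum_univ_three]
  rw [hp_eq]
  refine (convex_convexHull ℝ _).sum_mem (fun i _ => ?_) (by simp [Fin.sum_univ_three]; ring)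
    fun i _ => ?_
  · fin_cases i <;> simp <;> linarith
  · fin_cases i <;> exact subset_convexHull ℝ _ (by simp)

lemma isCompact_stdTriangle : IsCompact stdTriangle :=
  convexHull_eq_stdTriangle ▸ (toFinite _).isCompact_convexHull (𝕜 := ℝ)

lemma measurableSet_stdTriangle : MeasurableSet stdTriangle :=
  isCompact_stdTriangle.isClosed.measurableSet

lemma preimage_swap_stdTriangle : Prod.swap ⁻¹' stdTriangle = stdTriangle := by
  ext p
  simp only [stdTriangle, mem_preimage, mem_ofPred_eq, Prod.fst_swap, Prod.snd_swap]
  constructor <;> rintro ⟨h₁, h₂, h⟩ <;> exact ⟨h₂, h₁, by linarith⟩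

lemma setIntegral_stdTriangle_comp_swap (h : ℝ × ℝ → ℝ) :
    ∫ z in stdTriangle, h z.swap = ∫ z in stdTriangle, h z := by
  conv_lhs => rw [← preimage_swap_stdTriangle]
  exact (Measure.measurePreserving_swap (μ := volume) (ν := volume)).setIntegral_preimage_emb
    MeasurableEquiv.prodComm.measurableEmbedding h stdTriangle

lemma mem_stdTriangle_iff {x y : ℝ} :
    (x, y) ∈ stdTriangle ↔ x ∈ Icc (0 : ℝ) 1 ∧ y ∈ Icc 0 (1 - x) := by
  simp only [stdTriangle, mem_ofPred_eq, mem_Icc]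
  constructor
  · rintro ⟨hx, hy, h⟩; exact ⟨⟨hx, by linarith⟩, hy, by linarith⟩
  · rintro ⟨⟨hx, -⟩, hy, h⟩; exact ⟨hx, hy, by linarith⟩

lemma setIntegral_stdTriangle {h : ℝ × ℝ → ℝ} (hh : IntegrableOn h stdTriangle) :
    ∫ z in stdTriangle, h z = ∫ x in (0 : ℝ)..1, ∫ y in (0 : ℝ)..(1 - x), h (x, y) := by
  have hslice : ∀ x, ∫ y, stdTriangle.indicator h (x, y) =
      (Icc 0 1).indicator (fun x => ∫ y in (0 : ℝ)..(1 - x), h (x, y)) x := by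
    intro x
    by_cases hx : x ∈ Icc (0 : ℝ) 1
    · have hx' : (0 : ℝ) ≤ 1 - x := by linarith [hx.2]
      have : ∀ y, stdTriangle.indicator h (x, y) =
          (Icc 0 (1 - x)).indicator (fun y => h (x, y)) y :=
        fun y => by simp only [indicator, mem_stdTriangle_iff, and_iff_right hx]
      simp only [this, integral_indicator measurableSet_Icc, indicator_of_mem hx,
        intervalIntegral.integral_of_le hx', integral_Icc_eq_integral_Ioc]
    · have : ∀ y, stdTriangle.indicator h (x, y) = 0 :=
        fun y => indicator_of_notMem (fun hxy => hx (mem_stdTriangle_iff.1 hxy).1) _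
      simp [this, hx]
  rw [← integral_indicator measurableSet_stdTriangle, Measure.volume_eq_prod,
    integral_prod _ ((integrable_indicator_iff measurableSet_stdTriangle).2 hh), funext hslice,
    integral_indicator measurableSet_Icc, intervalIntegral.integral_of_le zero_le_one,
    integral_Icc_eq_integral_Ioc]

lemma ContinuousOn.intervalIntegrable_comp_of_mapsTo {g : ℝ × ℝ → ℝ} {V : Set (ℝ × ℝ)}
    (hg : ContinuousOn g V) {p : ℝ → ℝ × ℝ} (hp : Continuous p) (hpV : MapsTo p (Icc 0 1) V) :
    IntervalIntegrable (fun s => g (p s)) volume 0 1 :=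
  (hg.comp hp.continuousOn (by rwa [uIcc_of_le zero_le_one])).intervalIntegrable

lemma integral_comp_one_sub {E : Type*} [NormedAddCommGroup E] [NormedSpace ℝ E] (f : ℝ → E) :
    ∫ s in (0 : ℝ)..1, f (1 - s) = ∫ s in (0 : ℝ)..1, f s := by
  simp [intervalIntegral.integral_comp_sub_left f (1 : ℝ)]

lemma integral_stdTriangle_fderiv_snd {g : ℝ × ℝ → ℝ} {V : Set (ℝ × ℝ)} (hV : IsOpen V)
    (hTV : stdTriangle ⊆ V) (hg : ContDiffOn ℝ 1 g V) :
    ∫ z in stdTriangle, fderiv ℝ g z (0, 1) =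
      (∫ s in (0 : ℝ)..1, g (1 - s, s)) - ∫ s in (0 : ℝ)..1, g (s, 0) := by
  have hDg := hg.continuousOn_fderiv_of_isOpen hV le_rfl
  have hcont : ContinuousOn (fun z => fderiv ℝ g z (0, 1)) V := by fun_prop
  have hhyp : ∫ s in (0 : ℝ)..1, g (1 - s, s) = ∫ s in (0 : ℝ)..1, g (s, 1 - s) := by
    simpa using integral_comp_one_sub fun s => g (s, 1 - s)
  rw [setIntegral_stdTriangle ((hcont.mono hTV).integrableOn_compact isCompact_stdTriangle), hhyp,
    ← intervalIntegral.integral_sub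
      (hg.continuousOn.intervalIntegrable_comp_of_mapsTo (by fun_prop) fun s hs =>
        hTV ⟨hs.1, by linarith [hs.2], by linarith⟩)
      (hg.continuousOn.intervalIntegrable_comp_of_mapsTo (by fun_prop) fun s hs =>
        hTV ⟨hs.1, le_rfl, by linarith [hs.2]⟩)]
  refine intervalIntegral.integral_congr fun x hx => ?_
  rw [uIcc_of_le zero_le_one] at hx
  have hslice : ∀ y ∈ uIcc 0 (1 - x), (x, y) ∈ V := fun y hy =>
    hTV (mem_stdTriangle_iff.2 ⟨hx, by rwa [uIcc_of_le (by linarith [hx.2])] at hy⟩)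
  refine intervalIntegral.integral_eq_sub_of_hasDerivAt (f := fun y => g (x, y)) (fun y hy => ?_)
    (hcont.comp (by fun_prop) hslice).intervalIntegrable
  exact ((hg.contDiffAt (hV.mem_nhds (hslice y hy))).differentiableAt one_ne_zero).hasFDerivAt
    |>.comp_hasDerivAt y ((hasDerivAt_const y x).prodMk (hasDerivAt_id y))

lemma integral_stdTriangle_fderiv_fst {g : ℝ × ℝ → ℝ} {V : Set (ℝ × ℝ)} (hV : IsOpen V)
    (hTV : stdTriangle ⊆ V) (hg : ContDiffOn ℝ 1 g V) :
    ∫ z in stdTriangle, fderiv ℝ g z (1, 0) =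
      (∫ s in (0 : ℝ)..1, g (1 - s, s)) - ∫ s in (0 : ℝ)..1, g (0, s) := by
  let swapL : ℝ × ℝ →L[ℝ] ℝ × ℝ :=
    (ContinuousLinearMap.snd ℝ ℝ ℝ).prod (ContinuousLinearMap.fst ℝ ℝ ℝ)
  have hswapV : stdTriangle ⊆ Prod.swap ⁻¹' V := by
    rw [← preimage_swap_stdTriangle]; exact preimage_mono hTV
  have hfderiv : ∀ z ∈ stdTriangle,
      fderiv ℝ g z.swap (1, 0) = fderiv ℝ (g ∘ Prod.swap) z (0, 1) := by
    intro z hz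
    have hgz := (hg.contDiffAt (hV.mem_nhds (hswapV hz))).differentiableAt one_ne_zero
    rw [(hgz.hasFDerivAt.comp z swapL.hasFDerivAt).fderiv]
    rfl
  rw [← setIntegral_stdTriangle_comp_swap,
    setIntegral_congr_fun measurableSet_stdTriangle hfderiv,
    integral_stdTriangle_fderiv_snd (g := g ∘ Prod.swap) (hV.preimage continuous_swap) hswapV
      (hg.comp swapL.contDiff.contDiffOn fun _ h => h),
    ← integral_comp_one_sub fun s => g (1 - s, s)]
  simp only [Function.comp_apply, Prod.swap_prod_mk, sub_sub_cancel]

def triangleFrame (v : Fin 3 → ℝ × ℝ) : ℝ × ℝ →L[ℝ] ℝ × ℝ :=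
  (ContinuousLinearMap.fst ℝ ℝ ℝ).smulRight (v 1 - v 0) +
    (ContinuousLinearMap.snd ℝ ℝ ℝ).smulRight (v 2 - v 0)

def triangleMap (v : Fin 3 → ℝ × ℝ) : (ℝ × ℝ) →ᵃ[ℝ] ℝ × ℝ :=
  (triangleFrame v).toLinearMap.toAffineMap + AffineMap.const ℝ (ℝ × ℝ) (v 0)

lemma triangleMap_apply (v : Fin 3 → ℝ × ℝ) (z : ℝ × ℝ) :
    triangleMap v z = (1 - z.1 - z.2) • v 0 + z.1 • v 1 + z.2 • v 2 := by
  simp only [triangleMap, triangleFrame, ContinuousLinearMap.toLinearMap_add,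
    ContinuousLinearMap.coe_smulRight, ContinuousLinearMap.coe_fst, ContinuousLinearMap.coe_snd,
    AffineMap.coe_add, LinearMap.coe_toAffineMap, AffineMap.coe_const, Pi.add_apply,
    LinearMap.add_apply, LinearMap.coe_smulRight, LinearMap.fst_apply, LinearMap.snd_apply,
    Function.const_apply]
  module

lemma hasFDerivAt_triangleMap (v : Fin 3 → ℝ × ℝ) (z : ℝ × ℝ) :
    HasFDerivAt (triangleMap v) (triangleFrame v) z :=
  (triangleFrame v).hasFDerivAt.add_const (v 0)

lemma det_triangleFrame (v : Fin 3 → ℝ × ℝ) :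
    (triangleFrame v).det = dot (v 1 - v 0) (perp (v 2 - v 0)) := by
  rw [ContinuousLinearMap.det, ← LinearMap.det_toMatrix (Module.Basis.finTwoProd ℝ),
    Matrix.det_fin_two]
  simp [LinearMap.toMatrix_apply, triangleFrame, dot, perp]
  ring

lemma AffineIndependent.injective_triangleMap {v : Fin 3 → ℝ × ℝ} (hv : AffineIndependent ℝ v) :
    Function.Injective (triangleMap v) := by
  let w : ℝ × ℝ → Fin 3 → ℝ := fun z => ![1 - z.1 - z.2, z.1, z.2]
  have hw : ∀ z, ∑ i, w z i = 1 := fun z => by simp [w, Fin.sum_univ_three]; ring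
  have hcomb : ∀ z, Finset.univ.affineCombination ℝ v (w z) = triangleMap v z := fun z => by
    rw [Finset.affineCombination_eq_linear_combination _ _ _ (hw z), Fin.sum_univ_three,
      triangleMap_apply]
    rfl
  intro z z' h
  have hzz' := (affineIndependent_iff_eq_of_fintype_affineCombination_eq ℝ v).1 hv _ _
    (hw z) (hw z') (by rw [hcomb, hcomb, h])
  exact Prod.ext (congrFun hzz' 1) (congrFun hzz' 2)

lemma image_triangleMap_stdTriangle (v : Fin 3 → ℝ × ℝ) :
    triangleMap v '' stdTriangle = convexHull ℝ {v 0, v 1, v 2} := by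
  rw [← convexHull_eq_stdTriangle, AffineMap.image_convexHull, image_insert_eq, image_insert_eq,
    image_singleton]
  simp [triangleMap_apply]

lemma fderiv_dot_comp_triangleMap {v : Fin 3 → ℝ × ℝ} {F : ℝ × ℝ → ℝ × ℝ} {z : ℝ × ℝ}
    (hF : DifferentiableAt ℝ F (triangleMap v z)) (c e : ℝ × ℝ) :
    fderiv ℝ (fun z => dot (F (triangleMap v z)) c) z e =
      dot (fderiv ℝ F (triangleMap v z) (triangleFrame v e)) c := by
  have hFφ := hF.hasFDerivAt.comp z (hasFDerivAt_triangleMap v z)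
  rw [HasFDerivAt.fderiv (f := fun z => dot (F (triangleMap v z)) c)
    ((hFφ.fst.mul_const c.1).fun_add (hFφ.snd.mul_const c.2))]
  simp [dot, mul_comm]

lemma dot_perp_mul_div2_triangleMap {v : Fin 3 → ℝ × ℝ} {F : ℝ × ℝ → ℝ × ℝ} {z : ℝ × ℝ}
    (hF : DifferentiableAt ℝ F (triangleMap v z)) :
    dot (v 1 - v 0) (perp (v 2 - v 0)) * div2 F (triangleMap v z) =
      fderiv ℝ (fun z => dot (F (triangleMap v z)) (perp (v 2 - v 0))) z (1, 0) -
        fderiv ℝ (fun z => dot (F (triangleMap v z)) (perp (v 1 - v 0))) z (0, 1) := by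
  rw [fderiv_dot_comp_triangleMap hF, fderiv_dot_comp_triangleMap hF, div2,
    dot_perp_mul_trace]
  simp [triangleFrame]

lemma contDiff_triangleMap (v : Fin 3 → ℝ × ℝ) : ContDiff ℝ 1 (triangleMap v) :=
  (triangleFrame v).contDiff.add contDiff_const

lemma sum_edgeFlux_eq_integral_triangleMap {v : Fin 3 → ℝ × ℝ} {F : ℝ × ℝ → ℝ × ℝ}
    (hF : ContinuousOn (fun z => F (triangleMap v z)) stdTriangle) :
    ∑ i : Fin 3, edgeFlux F (v (i + 1)) (v (i + 2)) =
      ((∫ s in (0 : ℝ)..1, dot (F (triangleMap v (1 - s, s))) (perp (v 2 - v 0))) -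
          ∫ s in (0 : ℝ)..1, dot (F (triangleMap v (0, s))) (perp (v 2 - v 0))) -
        ((∫ s in (0 : ℝ)..1, dot (F (triangleMap v (1 - s, s))) (perp (v 1 - v 0))) -
          ∫ s in (0 : ℝ)..1, dot (F (triangleMap v (s, 0))) (perp (v 1 - v 0))) := by
  have hhyp : ∀ c,
      IntervalIntegrable (fun s => dot (F (triangleMap v (1 - s, s))) c) volume 0 1 := fun c =>
    ContinuousOn.intervalIntegrable_comp_of_mapsTo (g := fun z => dot (F (triangleMap v z)) c)
      (((continuous_fst.comp_continuousOn hF).mul continuousOn_const).add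
        ((continuous_snd.comp_continuousOn hF).mul continuousOn_const))
      (by fun_prop) fun s hs => ⟨by linarith [hs.2], hs.1, by linarith⟩
  have hE₀ : edgeFlux F (v 1) (v 2) =
      (∫ s in (0 : ℝ)..1, dot (F (triangleMap v (1 - s, s))) (perp (v 2 - v 0))) -
        ∫ s in (0 : ℝ)..1, dot (F (triangleMap v (1 - s, s))) (perp (v 1 - v 0)) := by
    rw [← intervalIntegral.integral_sub (hhyp _) (hhyp _)]
    refine intervalIntegral.integral_congr fun s _ => ?_
    have : triangleMap v (1 - s, s) = (1 - s) • v 1 + s • v 2 := by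
      rw [triangleMap_apply]; module
    simp only [this, dot, perp, Prod.fst_sub, Prod.snd_sub]
    ring
  have hE₁ : edgeFlux F (v 2) (v 0) =
      -∫ s in (0 : ℝ)..1, dot (F (triangleMap v (0, s))) (perp (v 2 - v 0)) := by
    rw [← integral_comp_one_sub, ← intervalIntegral.integral_neg]
    refine intervalIntegral.integral_congr fun s _ => ?_
    have : triangleMap v (0, 1 - s) = (1 - s) • v 2 + s • v 0 := by
      rw [triangleMap_apply]; module
    simp only [this, dot, perp, Prod.fst_sub, Prod.snd_sub]
    ring
  have hE₂ : edgeFlux F (v 0) (v 1) =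
      ∫ s in (0 : ℝ)..1, dot (F (triangleMap v (s, 0))) (perp (v 1 - v 0)) := by
    refine intervalIntegral.integral_congr fun s _ => ?_
    have : triangleMap v (s, 0) = (1 - s) • v 0 + s • v 1 := by
      rw [triangleMap_apply]; module
    simp only [this]
  simp only [Fin.sum_univ_three, Fin.isValue, Fin.reduceAdd]
  rw [hE₀, hE₁, hE₂]
  ring

lemma mul_setIntegral_div2_triangleMap {v : Fin 3 → ℝ × ℝ} {F : ℝ × ℝ → ℝ × ℝ}
    {U : Set (ℝ × ℝ)} (hU : IsOpen U) (hKU : convexHull ℝ {v 0, v 1, v 2} ⊆ U)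
    (hF : ContDiffOn ℝ 1 F U) :
    dot (v 1 - v 0) (perp (v 2 - v 0)) * ∫ z in stdTriangle, div2 F (triangleMap v z) =
      ∑ i : Fin 3, edgeFlux F (v (i + 1)) (v (i + 2)) := by
  set φ := triangleMap v
  set V := φ ⁻¹' U
  let g : ℝ × ℝ → ℝ × ℝ → ℝ := fun c z => dot (F (φ z)) c
  have hV : IsOpen V := hU.preimage (contDiff_triangleMap v).continuous
  have hTV : stdTriangle ⊆ V := fun z hz =>
    hKU (image_triangleMap_stdTriangle v ▸ mem_image_of_mem φ hz)
  have hFφ : ContDiffOn ℝ 1 (fun z => F (φ z)) V :=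
    hF.comp (contDiff_triangleMap v).contDiffOn (mapsTo_preimage φ U)
  have hg : ∀ c, ContDiffOn ℝ 1 (g c) V := fun c =>
    ((contDiff_fst.comp_contDiffOn hFφ).mul contDiffOn_const).add
      ((contDiff_snd.comp_contDiffOn hFφ).mul contDiffOn_const)
  have hdiv : ∀ z ∈ stdTriangle, dot (v 1 - v 0) (perp (v 2 - v 0)) * div2 F (φ z) =
      fderiv ℝ (g (perp (v 2 - v 0))) z (1, 0) - fderiv ℝ (g (perp (v 1 - v 0))) z (0, 1) :=
    fun z hz => dot_perp_mul_div2_triangleMap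
      ((hF.contDiffAt (hU.mem_nhds (hTV hz))).differentiableAt one_ne_zero)
  have hintegrable : ∀ c e, IntegrableOn (fun z => fderiv ℝ (g c) z e) stdTriangle := fun c e =>
    (((hg c).continuousOn_fderiv_of_isOpen hV le_rfl).clm_apply continuousOn_const).mono hTV
      |>.integrableOn_compact isCompact_stdTriangle
  rw [← integral_const_mul, setIntegral_congr_fun measurableSet_stdTriangle hdiv,
    integral_sub (hintegrable _ _) (hintegrable _ _),
    integral_stdTriangle_fderiv_fst hV hTV (hg _), integral_stdTriangle_fderiv_snd hV hTV (hg _),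
    sum_edgeFlux_eq_integral_triangleMap (hFφ.continuousOn.mono hTV)]

theorem setIntegral_div2_convexHull {v : Fin 3 → ℝ × ℝ} (hv : AffineIndependent ℝ v)
    {F : ℝ × ℝ → ℝ × ℝ} {U : Set (ℝ × ℝ)} (hU : IsOpen U)
    (hKU : convexHull ℝ {v 0, v 1, v 2} ⊆ U) (hF : ContDiffOn ℝ 1 F U) :
    ∫ x in convexHull ℝ {v 0, v 1, v 2}, div2 F x =
      SignType.sign (dot (v 1 - v 0) (perp (v 2 - v 0))) *
        ∑ i : Fin 3, edgeFlux F (v (i + 1)) (v (i + 2)) := by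
  rw [← image_triangleMap_stdTriangle, integral_image_eq_integral_abs_det_fderiv_smul volume
    measurableSet_stdTriangle (fun z _ => (hasFDerivAt_triangleMap v z).hasFDerivWithinAt)
    hv.injective_triangleMap.injOn, ← mul_setIntegral_div2_triangleMap hU hKU hF,
    det_triangleFrame, integral_smul, smul_eq_mul, ← mul_assoc, sign_mul_self]

theorem commuting_divergence_moments_general
    (v : Fin 3 → ℝ × ℝ) (hv : AffineIndependent ℝ v)
    (K : Set (ℝ × ℝ)) (hK : K = convexHull ℝ {v 0, v 1, v 2})
    (n : Fin 3 → ℝ × ℝ)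
    (hn_unit : ∀ i : Fin 3, (n i).1 ^ 2 + (n i).2 ^ 2 = 1)
    (hn_normal : ∀ i : Fin 3, dot (n i) (v (i + 2) - v (i + 1)) = 0)
    (U : Set (ℝ × ℝ)) (hU : IsOpen U) (hKU : K ⊆ U)
    (u w : (ℝ × ℝ) → ℝ × ℝ)
    (hu : ContDiffOn ℝ 1 u U) (hw : ContDiffOn ℝ 1 w U)
    (hedge : ∀ γ : (ℝ × ℝ) →ᵃ[ℝ] ℝ, ∀ i : Fin 3,
      lineIntegral (fun x => γ x * dot (w x - u x) (n i))
        (v (i + 1)) (v (i + 2)) = 0)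
    (hint : ∀ γ : (ℝ × ℝ) →ᵃ[ℝ] ℝ,
      ∫ x in K, dot (grad2 (⇑γ) x) (w x - u x) = 0) :
    ∀ α : (ℝ × ℝ) →ᵃ[ℝ] ℝ,
      ∫ x in K, α x * (div2 w x - div2 u x) = 0 := by
  intro α
  have hKc : IsCompact K := hK ▸ (toFinite _).isCompact_convexHull (𝕜 := ℝ)
  have hα : ContDiffOn ℝ 1 α U := α.contDiff.contDiffOn
  have hf : ContDiffOn ℝ 1 (fun x => w x - u x) U := hw.sub hu
  have hflux : ∀ i : Fin 3,
      edgeFlux (fun x => α x • (w x - u x)) (v (i + 1)) (v (i + 2)) = 0 := fun i => by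
    rw [← abs_eq_zero, abs_edgeFlux_eq_abs_lineIntegral _ (hn_unit i) (hn_normal i), abs_eq_zero]
    simpa only [dot_smul_left] using hedge α i
  calc ∫ x in K, α x * (div2 w x - div2 u x)
      = ∫ x in K, α x * div2 (fun x => w x - u x) x := by
        refine setIntegral_congr_fun hKc.measurableSet fun x hx => ?_
        have hU_nhds := hU.mem_nhds (hKU hx)
        rw [div2_sub ((hw.contDiffAt hU_nhds).differentiableAt one_ne_zero)
          ((hu.contDiffAt hU_nhds).differentiableAt one_ne_zero)]
    _ = (∫ x in K, div2 (fun y => α y • (w y - u y)) x) -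
          ∫ x in K, dot (grad2 α x) (w x - u x) :=
        setIntegral_mul_div2_eq_sub hKc hU hKU hα hf
    _ = 0 := by
        rw [hint α, hK, setIntegral_div2_convexHull (F := fun y => α y • (w y - u y)) hv hU
          (hK ▸ hKU) (hα.smul hf)]
        simp [hflux]

/-- **Commuting-diagram property of the BDFM1 projection.**
Let `u`, `w` be `C¹` on an open neighbourhood of the triangle
`K = conv{v 0, v 1, v 2}`, let `n i` be the outward unit normal on edge
`e i`. If the edge normal moments of `w − u` against affine functions
vanish and the interior moments of `w − u` against gradients of affine
functions vanish, then `∫_K α (∇·w − ∇·u) dx = 0` for every affine `α`. -/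
theorem commuting_divergence_moments
    (v : Fin 3 → ℝ × ℝ) (hv : AffineIndependent ℝ v)
    (K : Set (ℝ × ℝ)) (hK : K = convexHull ℝ {v 0, v 1, v 2})
    (n : Fin 3 → ℝ × ℝ)
    (hn_unit : ∀ i : Fin 3, (n i).1 ^ 2 + (n i).2 ^ 2 = 1)
    (hn_normal : ∀ i : Fin 3, dot (n i) (v (i + 2) - v (i + 1)) = 0)
    (hn_outward : ∀ i : Fin 3, dot (n i) (v i - v (i + 1)) < 0)
    (U : Set (ℝ × ℝ)) (hU : IsOpen U) (hKU : K ⊆ U)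
    (u w : (ℝ × ℝ) → ℝ × ℝ)
    (hu : ContDiffOn ℝ 1 u U) (hw : ContDiffOn ℝ 1 w U)
    (hedge : ∀ γ : (ℝ × ℝ) →ᵃ[ℝ] ℝ, ∀ i : Fin 3,
      lineIntegral (fun x => γ x * dot (w x - u x) (n i))
        (v (i + 1)) (v (i + 2)) = 0)
    (hint : ∀ γ : (ℝ × ℝ) →ᵃ[ℝ] ℝ,
      ∫ x in K, dot (grad2 (⇑γ) x) (w x - u x) = 0) :
    ∀ α : (ℝ × ℝ) →ᵃ[ℝ] ℝ,
      ∫ x in K, α x * (div2 w x - div2 u x) = 0 :=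
  commuting_divergence_moments_general v hv K hK n hn_unit hn_normal U hU hKU u w hu hw hedge hint
end
end

section
/- Let U ⊆ ℝ² be open, let g : U → ℝ² be a C¹ diffeomorphism onto its open image with det Dg(ξ) ≠ 0 on U, let û : U → ℝ² be continuous, and define u on g(U) by the Piola transformation u(g(ξ)) = (1 / det Dg(ξ)) Dg(ξ) û(ξ). Then for every C¹ curve ξ : [0,1] → U, the fluxes agree: ∫₀¹ det₂(û(ξ(s)), ξ'(s)) ds = ∫₀¹ det₂(u(g(ξ(s))), (g ∘ ξ)'(s)) ds, where det₂((a₁,a₂),(b₁,b₂)) = a₁ b₂ − a₂ b₁. -/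
open MeasureTheory

noncomputable section

/-- `det₂((a₁,a₂),(b₁,b₂)) = a₁ b₂ − a₂ b₁`. -/
def det2 (a b : ℝ × ℝ) : ℝ := a.1 * b.2 - a.2 * b.1

/-- Jacobian determinant of a map `g : ℝ² → ℝ²`. -/
def jdet (g : ℝ × ℝ → ℝ × ℝ) (x : ℝ × ℝ) : ℝ :=
  (fderiv ℝ g x (1, 0)).1 * (fderiv ℝ g x (0, 1)).2 -
    (fderiv ℝ g x (1, 0)).2 * (fderiv ℝ g x (0, 1)).1

/-! The Piola factor `1 / det Dg` exactly cancels the factor `det Dg` by which `Dg` scales the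
area form `det₂`, so the two flux densities agree pointwise along the curve. -/

lemma det2_smul_left (r : ℝ) (a b : ℝ × ℝ) : det2 (r • a) b = r * det2 a b := by
  simp only [det2, Prod.smul_fst, Prod.smul_snd, smul_eq_mul]
  ring

lemma det2_map (A : ℝ × ℝ →ₗ[ℝ] ℝ × ℝ) (v w : ℝ × ℝ) :
    det2 (A v) (A w) = det2 (A (1, 0)) (A (0, 1)) * det2 v w := by
  have basis_expansion (x : ℝ × ℝ) :
      x = x.1 • ((1 : ℝ), (0 : ℝ)) + x.2 • ((0 : ℝ), (1 : ℝ)) := by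
    simp
  rw [basis_expansion v, basis_expansion w]
  simp only [map_add, map_smul, det2, Prod.fst_add, Prod.snd_add, Prod.smul_fst,
    Prod.smul_snd, smul_eq_mul]
  ring

lemma jdet_eq_det2 (g : ℝ × ℝ → ℝ × ℝ) (x : ℝ × ℝ) :
    jdet g x = det2 (fderiv ℝ g x (1, 0)) (fderiv ℝ g x (0, 1)) := rfl

lemma det2_jdet_inv_smul_fderiv {g : ℝ × ℝ → ℝ × ℝ} {x : ℝ × ℝ} (hx : jdet g x ≠ 0)
    (a b : ℝ × ℝ) :
    det2 ((1 / jdet g x) • fderiv ℝ g x a) (fderiv ℝ g x b) = det2 a b := by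
  rw [det2_smul_left]
  have hmap := det2_map (fderiv ℝ g x).toLinearMap a b
  simp only [ContinuousLinearMap.coe_coe, ← jdet_eq_det2] at hmap
  rw [hmap]
  field_simp

theorem piola_preserves_flux_general
    (U : Set (ℝ × ℝ)) (hU : IsOpen U)
    (g : ℝ × ℝ → ℝ × ℝ) (hg : ContDiffOn ℝ 1 g U)
    (hjd : ∀ ξ ∈ U, jdet g ξ ≠ 0)
    (uh : ℝ × ℝ → ℝ × ℝ)
    (u : ℝ × ℝ → ℝ × ℝ)
    (hu : ∀ ξ ∈ U, u (g ξ) = (1 / jdet g ξ) • fderiv ℝ g ξ (uh ξ))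
    (c : ℝ → ℝ × ℝ) (c' : ℝ → ℝ × ℝ)
    (hc : ∀ s ∈ Set.Icc (0 : ℝ) 1, HasDerivAt c (c' s) s)
    (hcU : ∀ s ∈ Set.Icc (0 : ℝ) 1, c s ∈ U) :
    ∫ s in (0 : ℝ)..1, det2 (uh (c s)) (c' s) =
      ∫ s in (0 : ℝ)..1, det2 (u (g (c s))) (deriv (g ∘ c) s) := by
  refine intervalIntegral.integral_congr fun s hs => ?_
  rw [Set.uIcc_of_le zero_le_one] at hs
  have hcsU : c s ∈ U := hcU s hs
  have hg_diff : DifferentiableAt ℝ g (c s) :=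
    (hg.contDiffAt (hU.mem_nhds hcsU)).differentiableAt one_ne_zero
  have chain_rule : deriv (g ∘ c) s = fderiv ℝ g (c s) (c' s) :=
    (hg_diff.hasFDerivAt.comp_hasDerivAt s (hc s hs)).deriv
  simp only [chain_rule, hu (c s) hcsU, det2_jdet_inv_smul_fderiv (hjd (c s) hcsU)]

/-- **The Piola transformation preserves flux integrals.**
Let `g` be a `C¹` diffeomorphism of an open `U ⊆ ℝ²` onto its open image with
`det Dg ≠ 0` on `U`, `û` continuous on `U`, and define `u` on `g(U)` by the
Piola transformation `u(g ξ) = (1 / det Dg ξ) • Dg ξ (û ξ)`. Then for every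
`C¹` curve `c : [0,1] → U`, the flux of `û` across `c` equals the flux of `u`
across `g ∘ c`:
`∫₀¹ det₂(û(c s), c' s) ds = ∫₀¹ det₂(u(g(c s)), (g ∘ c)'(s)) ds`. -/
theorem piola_preserves_flux
    (U : Set (ℝ × ℝ)) (hU : IsOpen U)
    (g : ℝ × ℝ → ℝ × ℝ) (hg : ContDiffOn ℝ 1 g U)
    (hg_inj : Set.InjOn g U)
    (hjd : ∀ ξ ∈ U, jdet g ξ ≠ 0)
    (uh : ℝ × ℝ → ℝ × ℝ) (huh : ContinuousOn uh U)
    (u : ℝ × ℝ → ℝ × ℝ)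
    (hu : ∀ ξ ∈ U, u (g ξ) = (1 / jdet g ξ) • fderiv ℝ g ξ (uh ξ))
    (c : ℝ → ℝ × ℝ) (c' : ℝ → ℝ × ℝ)
    (hc : ∀ s ∈ Set.Icc (0 : ℝ) 1, HasDerivAt c (c' s) s)
    (hc' : ContinuousOn c' (Set.Icc (0 : ℝ) 1))
    (hcU : ∀ s ∈ Set.Icc (0 : ℝ) 1, c s ∈ U) :
    ∫ s in (0 : ℝ)..1, det2 (uh (c s)) (c' s) =
      ∫ s in (0 : ℝ)..1, det2 (u (g (c s))) (deriv (g ∘ c) s) :=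
  piola_preserves_flux_general U hU g hg hjd uh u hu c c' hc hcU
end
end
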